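/- arXiv:2507.22854 — 7 statements merged into one kernel-verified Lean document; each statement's English description precedes it below -/
import Mathlib

section
/- Let m be a positive integer and z_1, ..., z_m be real numbers such that 0 ≤ z_k ≤ Z_{k-1} for every k ∈ {1,...,m}, where Z_0 := 1 and Z_k := max{1, z_1 + ... + z_k}. Then for every γ ∈ (0, 1], the sum ∑_{k=1}^m z_k / Z_{k-1}^{1-γ} is at most Z_m^γ / (2^γ − 1). -/
/-- Key pointwise inequality: for `a ≥ 1`, `0 ≤ w ≤ a`, `γ ∈ (0,1]`,
`(2^γ - 1) * (w / a^(1-γ)) ≤ (a+w)^γ - a^γ`. -/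
lemma key_ineq (γ a w : ℝ) (hγ0 : 0 < γ) (hγ1 : γ ≤ 1) (ha : 1 ≤ a)
    (hw0 : 0 ≤ w) (hwa : w ≤ a) :
    ((2:ℝ) ^ γ - 1) * (w / a ^ ((1:ℝ) - γ)) ≤ (a + w) ^ γ - a ^ γ := by
  have ha0 : (0:ℝ) < a := lt_of_lt_of_le one_pos ha
  set t : ℝ := w / a with ht
  have ht0 : 0 ≤ t := div_nonneg hw0 ha0.le
  have ht1 : t ≤ 1 := (div_le_one ha0).mpr hwa
  -- concavity: (1+t)^γ ≥ (1-t)*1 + t*2^γ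
  have key : (1 - t) * 1 + t * (2:ℝ) ^ γ ≤ (1 + t) ^ γ := by
    rcases eq_or_lt_of_le hγ1 with hγe | hγlt
    · subst hγe
      rw [Real.rpow_one, Real.rpow_one]
      linarith
    · have hc := (Real.strictConcaveOn_rpow hγ0 hγlt).concaveOn
      have h1 : (1:ℝ) ∈ Set.Ici (0:ℝ) := by norm_num
      have h2 : (2:ℝ) ∈ Set.Ici (0:ℝ) := by norm_num
      have h := hc.2 h1 h2 (by linarith : (0:ℝ) ≤ 1 - t) ht0 (by ring)
      have e1 : ((1:ℝ)) ^ γ = 1 := Real.one_rpow γ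
      simp only [smul_eq_mul] at h
      have : (1 - t) * (1:ℝ) + t * 2 = 1 + t := by ring
      rw [this] at h
      calc (1 - t) * 1 + t * (2:ℝ) ^ γ = (1 - t) * (1:ℝ)^γ + t * (2:ℝ)^γ := by rw [e1]
        _ ≤ (1 + t) ^ γ := h
  -- multiply by a^γ
  have hapow : (0:ℝ) < a ^ γ := Real.rpow_pos_of_pos ha0 γ
  have hmul : (a + w) ^ γ = a ^ γ * (1 + t) ^ γ := by
    rw [← Real.mul_rpow ha0.le (by linarith : (0:ℝ) ≤ 1 + t)]
    congr 1
    rw [ht]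
    field_simp
  have hdiv : w / a ^ ((1:ℝ) - γ) = a ^ γ * t := by
    rw [Real.rpow_sub ha0, Real.rpow_one, div_div_eq_mul_div]
    ring
  rw [hmul, hdiv]
  nlinarith [mul_le_mul_of_nonneg_left key hapow.le]

/-- For real numbers `z 0, …, z (m-1)` with partial maxima
`Z k = max 1 (z 0 + ⋯ + z (k-1))` satisfying `0 ≤ z k ≤ Z k`, for every `γ ∈ (0,1]`,
`∑_{k<m} z k / (Z k)^(1-γ) ≤ (Z m)^γ / (2^γ - 1)`. -/
theorem stmt_0 (m : ℕ) (hm : 0 < m) (z : ℕ → ℝ)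
    (Z : ℕ → ℝ) (hZ : ∀ k, Z k = max 1 (∑ i ∈ Finset.range k, z i))
    (hz : ∀ k < m, 0 ≤ z k ∧ z k ≤ Z k)
    (γ : ℝ) (hγ : γ ∈ Set.Ioc (0 : ℝ) 1) :
    ∑ k ∈ Finset.range m, z k / (Z k) ^ ((1 : ℝ) - γ) ≤ (Z m) ^ γ / ((2 : ℝ) ^ γ - 1) := by
  obtain ⟨hγ0, hγ1⟩ := hγ
  set S : ℕ → ℝ := fun k => ∑ i ∈ Finset.range k, z i with hS
  have hc0 : (0:ℝ) < (2:ℝ) ^ γ - 1 := by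
    have : (1:ℝ) = (2:ℝ) ^ (0:ℝ) := by simp
    nlinarith [Real.rpow_lt_rpow_of_exponent_lt (by norm_num : (1:ℝ) < 2) hγ0]
  have hc1 : (2:ℝ) ^ γ - 1 ≤ 1 := by
    have h2 : (2:ℝ) ^ γ ≤ (2:ℝ) ^ (1:ℝ) :=
      Real.rpow_le_rpow_of_exponent_le (by norm_num) hγ1
    rw [Real.rpow_one] at h2; linarith
  -- monotonicity of S up to m
  have hSmono : ∀ a b, a ≤ b → b ≤ m → S a ≤ S b := by
    intro a b hab hbm
    have : S b - S a = ∑ i ∈ Finset.Ico a b, z i := by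
      rw [hS]
      simp only
      rw [Finset.range_eq_Ico, ← Finset.sum_Ico_consecutive _ (Nat.zero_le a) hab]
      rw [Finset.range_eq_Ico]; ring
    have hpos : 0 ≤ ∑ i ∈ Finset.Ico a b, z i :=
      Finset.sum_nonneg fun i hi => (hz i (lt_of_lt_of_le (Finset.mem_Ico.mp hi).2 hbm)).1
    linarith
  have hZ1 : ∀ k, 1 ≤ Z k := fun k => (hZ k) ▸ le_max_left _ _
  by_cases hcase : S m ≤ 1
  · -- all Z k = 1
    have hZk : ∀ k, k ≤ m → Z k = 1 := by
      intro k hk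
      rw [hZ k, max_eq_left]
      exact (hSmono k m hk le_rfl).trans hcase
    have hsum : ∑ k ∈ Finset.range m, z k / (Z k) ^ ((1:ℝ) - γ) = S m := by
      apply Finset.sum_congr rfl
      intro k hk
      rw [hZk k (Finset.mem_range.mp hk).le, Real.one_rpow, div_one]
    rw [hsum, hZk m le_rfl, Real.one_rpow]
    rw [le_div_iff₀ hc0]
    nlinarith
  · -- there is a first index j with 1 < S j
    push_neg at hcase
    have hex : ∃ n, 1 < S n := ⟨m, hcase⟩
    set j := Nat.find hex with hj
    have hSj : 1 < S j := Nat.find_spec hex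
    have hjle : ∀ k < j, S k ≤ 1 := fun k hk => le_of_not_gt (Nat.find_min hex hk)
    have hj0 : 0 < j := by
      rcases Nat.eq_zero_or_pos j with h0 | h0
      · exfalso; rw [h0] at hSj; simp [hS] at hSj; linarith
      · exact h0
    have hjm : j ≤ m := Nat.find_le hcase
    -- Z k = 1 for k < j, Z k = S k for j ≤ k ≤ m
    have hZone : ∀ k < j, Z k = 1 := by
      intro k hk
      rw [hZ k, max_eq_left (hjle k hk)]
    have hZeq : ∀ k, j ≤ k → k ≤ m → Z k = S k := by
      intro k hk hkm
      rw [hZ k, max_eq_right (le_of_lt (lt_of_lt_of_le hSj (hSmono j k hk hkm)))]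
    -- S j ≤ 2
    have hSj2 : S j ≤ 2 := by
      have hstep : S j = S (j - 1) + z (j - 1) := by
        rw [hS]
        simp only
        rw [show j = (j-1) + 1 by omega, Finset.sum_range_succ]
        simp
      have h1 : S (j - 1) ≤ 1 := hjle (j - 1) (by omega)
      have h2 : z (j - 1) ≤ Z (j - 1) := (hz (j-1) (by omega)).2
      have h3 : Z (j - 1) = 1 := hZone (j-1) (by omega)
      rw [hstep]; rw [h3] at h2; linarith
    -- split the sum
    have hsplit : ∑ k ∈ Finset.range m, z k / (Z k) ^ ((1:ℝ) - γ)
        = (∑ k ∈ Finset.range j, z k / (Z k) ^ ((1:ℝ) - γ))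
          + ∑ k ∈ Finset.Ico j m, z k / (Z k) ^ ((1:ℝ) - γ) := by
      rw [Finset.range_eq_Ico, ← Finset.sum_Ico_consecutive _ (Nat.zero_le j) hjm,
        ← Finset.range_eq_Ico]
    have hfirst : ∑ k ∈ Finset.range j, z k / (Z k) ^ ((1:ℝ) - γ) = S j := by
      apply Finset.sum_congr rfl
      intro k hk
      rw [hZone k (Finset.mem_range.mp hk), Real.one_rpow, div_one]
    -- telescoping bound on second part
    have htel : ∀ n, j ≤ n → n ≤ m →
        ∑ k ∈ Finset.Ico j n, z k / (Z k) ^ ((1:ℝ) - γ)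
          ≤ ((S n) ^ γ - (S j) ^ γ) / ((2:ℝ) ^ γ - 1) := by
      intro n hn hnm
      induction n with
      | zero => omega
      | succ n ih =>
        rcases Nat.lt_or_ge j (n+1) with hlt | hge
        · have hjn : j ≤ n := by omega
          have hnm' : n ≤ m := by omega
          have ihh := ih hjn hnm'
          rw [Finset.sum_Ico_succ_top hjn]
          have hSn1 : 1 ≤ S n := le_of_lt (lt_of_lt_of_le hSj (hSmono j n hjn hnm'))
          have hzn := hz n (by omega)
          have hZn : Z n = S n := hZeq n hjn hnm'
          have hzZ : z n ≤ S n := hZn ▸ hzn.2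
          have hstep : S (n+1) = S n + z n := by
            rw [hS]; simp only; rw [Finset.sum_range_succ]
          have hkey := key_ineq γ (S n) (z n) hγ0 hγ1 hSn1 hzn.1 hzZ
          rw [hZn]
          rw [hstep]
          have : z n / (S n) ^ ((1:ℝ) - γ)
              ≤ ((S n + z n) ^ γ - (S n) ^ γ) / ((2:ℝ) ^ γ - 1) := by
            rw [le_div_iff₀ hc0]
            linarith [hkey]
          calc (∑ k ∈ Finset.Ico j n, z k / (Z k) ^ ((1:ℝ) - γ)) + z n / (S n) ^ ((1:ℝ) - γ)
              ≤ ((S n) ^ γ - (S j) ^ γ) / ((2:ℝ) ^ γ - 1)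
                + ((S n + z n) ^ γ - (S n) ^ γ) / ((2:ℝ) ^ γ - 1) := by
                exact add_le_add ihh this
            _ = ((S n + z n) ^ γ - (S j) ^ γ) / ((2:ℝ) ^ γ - 1) := by ring
        · have : j = n + 1 := by omega
          rw [this]
          simp
    have htelm := htel m hjm le_rfl
    -- final arithmetic: (2^γ - 1) * S j ≤ (S j)^γ
    have hSj0 : (0:ℝ) < S j := by linarith
    have hkeyj : ((2:ℝ) ^ γ - 1) * S j ≤ (S j) ^ γ := by
      have h1 : (S j) ^ (γ - 1) * S j = (S j) ^ γ := by
        nth_rewrite 2 [← Real.rpow_one (S j)]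
        rw [← Real.rpow_add hSj0]
        ring_nf
      have h2 : (2:ℝ) ^ (γ - 1) ≤ (S j) ^ (γ - 1) :=
        Real.rpow_le_rpow_of_nonpos hSj0 hSj2 (by linarith)
      have h3 : (2:ℝ) ^ γ - 1 ≤ (2:ℝ) ^ (γ - 1) := by
        have he : (2:ℝ) ^ (γ - 1) = (2:ℝ) ^ γ / 2 := by
          rw [Real.rpow_sub (by norm_num : (0:ℝ) < 2), Real.rpow_one]
        have h4 : (2:ℝ) ^ γ ≤ 2 := by
          have := Real.rpow_le_rpow_of_exponent_le (by norm_num : (1:ℝ) ≤ 2) hγ1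
          rwa [Real.rpow_one] at this
        rw [he]; linarith
      calc ((2:ℝ) ^ γ - 1) * S j ≤ (S j) ^ (γ - 1) * S j :=
            mul_le_mul_of_nonneg_right (h3.trans h2) hSj0.le
        _ = (S j) ^ γ := h1
    rw [hsplit, hfirst, hZeq m hjm le_rfl]
    have hB : (S j) ^ γ / ((2:ℝ) ^ γ - 1) ≥ S j := by
      rw [ge_iff_le, le_div_iff₀ hc0]
      linarith [hkeyj]
    have : ((S m) ^ γ - (S j) ^ γ) / ((2:ℝ) ^ γ - 1)
        = (S m) ^ γ / ((2:ℝ) ^ γ - 1) - (S j) ^ γ / ((2:ℝ) ^ γ - 1) := by ring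
    rw [this] at htelm
    linarith
end

section
/- Let n be a positive integer and z_1, ..., z_n be real numbers such that 0 ≤ z_k ≤ Z_{k-1} for every k ∈ {1,...,n}, where Z_0 := 1 and Z_k := max{1, z_1 + ... + z_k}. If Z_n ≥ 4, then ∑_{k=1}^n z_k / Z_{k-1} ≤ 4·log₂(Z_n / 2). -/
/-- For `x ∈ [0,1]`, `x ≤ log₂ (1+x)`. -/
lemma aux_lx (x : ℝ) (h0 : 0 ≤ x) (h1 : x ≤ 1) : x ≤ Real.logb 2 (1 + x) := by
  have hexp : Real.exp (x * Real.log 2) ≤ 1 + x := by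
    have h := convexOn_exp.2 (Set.mem_univ (0 : ℝ)) (Set.mem_univ (Real.log 2))
      (by linarith : (0:ℝ) ≤ 1 - x) h0 (by ring)
    simp only [smul_eq_mul, mul_zero, zero_add, Real.exp_zero, mul_one,
      Real.exp_log (by norm_num : (0:ℝ) < 2)] at h
    linarith
  have h2 : (2:ℝ) ^ x ≤ 1 + x := by
    rw [Real.rpow_def_of_pos (by norm_num)]
    rw [mul_comm] at hexp
    exact hexp
  rw [Real.le_logb_iff_rpow_le (by norm_num) (by linarith)]
  exact h2

/-- The per-step inequality. -/
lemma aux_step (s w : ℝ) (hs : 0 ≤ s) (hw0 : 0 ≤ w) (hw : w ≤ max 1 s) :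
    w / max 1 s ≤ (Real.logb 2 (max 1 (s + w)) + min (s + w) 1)
      - (Real.logb 2 (max 1 s) + min s 1) := by
  rcases le_or_gt 1 s with h1 | h1
  · have hM : max 1 s = s := max_eq_right h1
    have hM' : max 1 (s + w) = s + w := max_eq_right (by linarith)
    have hmin : min s 1 = 1 := min_eq_right h1
    have hmin' : min (s + w) 1 = 1 := min_eq_right (by linarith)
    rw [hM, hM', hmin, hmin']
    have hspos : 0 < s := by linarith
    have hdiv : Real.logb 2 (s + w) - Real.logb 2 s = Real.logb 2 ((s + w) / s) := by
      rw [Real.logb_div (by linarith) (by linarith)]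
    have hx : (s + w) / s = 1 + w / s := by field_simp
    have key : w / s ≤ Real.logb 2 (1 + w / s) := by
      apply aux_lx
      · positivity
      · rw [div_le_one hspos]; rw [hM] at hw; linarith
    rw [hx] at hdiv
    linarith
  · have hM : max 1 s = 1 := max_eq_left h1.le
    have hmin : min s 1 = s := min_eq_left h1.le
    rw [hM, hmin, Real.logb_one, div_one]
    rcases le_or_gt (s + w) 1 with h2 | h2
    · have hM' : max 1 (s + w) = 1 := max_eq_left h2
      have hmin' : min (s + w) 1 = s + w := min_eq_left h2
      rw [hM', hmin', Real.logb_one]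
      linarith
    · have hM' : max 1 (s + w) = s + w := max_eq_right h2.le
      have hmin' : min (s + w) 1 = 1 := min_eq_right h2.le
      rw [hM', hmin']
      have hw1 : w ≤ 1 := by rw [hM] at hw; exact hw
      have key : s + w - 1 ≤ Real.logb 2 (1 + (s + w - 1)) := by
        apply aux_lx <;> linarith
      have : (1 : ℝ) + (s + w - 1) = s + w := by ring
      rw [this] at key
      linarith

/-- For real numbers `z 0, …, z (n-1)` with partial maxima
`Z k = max 1 (z 0 + ⋯ + z (k-1))` satisfying `0 ≤ z k ≤ Z k`, if `Z n ≥ 4` then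
`∑_{k<n} z k / Z k ≤ 4 log₂ (Z n / 2)`. -/
theorem stmt_1 (n : ℕ) (hn : 0 < n) (z : ℕ → ℝ)
    (Z : ℕ → ℝ) (hZ : ∀ k, Z k = max 1 (∑ i ∈ Finset.range k, z i))
    (hz : ∀ k < n, 0 ≤ z k ∧ z k ≤ Z k)
    (hZn : 4 ≤ Z n) :
    ∑ k ∈ Finset.range n, z k / Z k ≤ 4 * Real.logb 2 (Z n / 2) := by
  set S : ℕ → ℝ := fun k => ∑ i ∈ Finset.range k, z i with hS
  set φ : ℕ → ℝ := fun k => Real.logb 2 (max 1 (S k)) + min (S k) 1 with hφ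
  have hSsucc : ∀ k, S (k + 1) = S k + z k := fun k => Finset.sum_range_succ z k
  have hSnn : ∀ k < n, 0 ≤ S k := by
    intro k hk
    apply Finset.sum_nonneg
    intro i hi
    exact (hz i (lt_of_lt_of_le (Finset.mem_range.mp hi) hk.le)).1
  have hstep : ∀ k ∈ Finset.range n, z k / Z k ≤ φ (k + 1) - φ k := by
    intro k hk
    rw [Finset.mem_range] at hk
    have := aux_step (S k) (z k) (hSnn k hk) (hz k hk).1 (by rw [← hZ k]; exact (hz k hk).2)
    rw [hZ k]
    simpa [hφ, hSsucc k] using this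
  calc ∑ k ∈ Finset.range n, z k / Z k
      ≤ ∑ k ∈ Finset.range n, (φ (k + 1) - φ k) := Finset.sum_le_sum hstep
    _ = φ n - φ 0 := Finset.sum_range_sub φ n
    _ ≤ Real.logb 2 (Z n) + 1 := by
        have h0 : φ 0 = 0 := by simp [hφ, hS]
        have hn' : φ n = Real.logb 2 (Z n) + min (S n) 1 := by rw [hφ, hZ n]
        have : min (S n) 1 ≤ 1 := min_le_right _ _
        rw [h0, hn']; linarith
    _ ≤ 4 * Real.logb 2 (Z n / 2) := by
        have hZpos : (0:ℝ) < Z n := by linarith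
        have hdiv : Real.logb 2 (Z n / 2) = Real.logb 2 (Z n) - 1 := by
          rw [Real.logb_div (by linarith) (by norm_num)]
          simp
        have h4 : Real.logb 2 4 = 2 := by
          rw [show (4:ℝ) = 2 ^ (2:ℕ) by norm_num, Real.logb_pow,
            Real.logb_self_eq_one (by norm_num)]
          norm_num
        have hmono : Real.logb 2 4 ≤ Real.logb 2 (Z n) :=
          Real.logb_le_logb_of_le (by norm_num) (by norm_num) hZn
        rw [h4] at hmono
        rw [hdiv]
        linarith
end

section
/- Let X be a nonempty set and for a bounded function w : X → ℝ define the span seminorm sp(w) := sup_{x∈X} w(x) − inf_{x∈X} w(x). Let ν ∈ [0,1), let N be a map from bounded real-valued functions on X to bounded real-valued functions on X satisfying sp(N u − N v) ≤ ν·sp(u − v) for all bounded u, v, let ε ≥ 0, and let (u_t)_{t≥0} be a sequence of bounded functions on X with ‖u_{t+1} − N u_t‖_∞ ≤ ε for all t ≥ 0. Then for every t ≥ 0: sp(u_{t+1} − u_t) ≤ ν^t·(sp(N u_0 − u_0) + 2ε) + 4ε·(1 − ν^t)/(1 − ν). -/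
/-- A real-valued function on `X` is bounded. -/
def IsBoundedFun {X : Type*} (f : X → ℝ) : Prop :=
  ∃ C, ∀ x, |f x| ≤ C

/-- The span seminorm `sp(w) = sup_x w x - inf_x w x` of a function `w : X → ℝ`. -/
noncomputable def spanSeminorm {X : Type*} (w : X → ℝ) : ℝ :=
  (⨆ x, w x) - ⨅ x, w x

lemma IsBoundedFun.bddAbove {X : Type*} {f : X → ℝ} (hf : IsBoundedFun f) :
    BddAbove (Set.range f) := by
  obtain ⟨C, hC⟩ := hf
  exact ⟨C, by rintro _ ⟨x, rfl⟩; exact (abs_le.1 (hC x)).2⟩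

lemma IsBoundedFun.bddBelow {X : Type*} {f : X → ℝ} (hf : IsBoundedFun f) :
    BddBelow (Set.range f) := by
  obtain ⟨C, hC⟩ := hf
  exact ⟨-C, by rintro _ ⟨x, rfl⟩; exact (abs_le.1 (hC x)).1⟩

lemma span_add_le {X : Type*} [Nonempty X] {f g : X → ℝ}
    (hf : IsBoundedFun f) (hg : IsBoundedFun g) :
    spanSeminorm (fun x => f x + g x) ≤ spanSeminorm f + spanSeminorm g := by
  unfold spanSeminorm
  have h1 : (⨆ x, f x + g x) ≤ (⨆ x, f x) + ⨆ x, g x :=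
    ciSup_le fun x => add_le_add (le_ciSup hf.bddAbove x) (le_ciSup hg.bddAbove x)
  have h2 : (⨅ x, f x) + (⨅ x, g x) ≤ ⨅ x, f x + g x :=
    le_ciInf fun x => add_le_add (ciInf_le hf.bddBelow x) (ciInf_le hg.bddBelow x)
  linarith

lemma span_le_of_abs_le {X : Type*} [Nonempty X] {f : X → ℝ} {ε : ℝ}
    (h : ∀ x, |f x| ≤ ε) : spanSeminorm f ≤ 2 * ε := by
  unfold spanSeminorm
  have h1 : (⨆ x, f x) ≤ ε := ciSup_le fun x => (abs_le.1 (h x)).2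
  have h2 : (-ε : ℝ) ≤ ⨅ x, f x := le_ciInf fun x => (abs_le.1 (h x)).1
  linarith

lemma IsBoundedFun.sub {X : Type*} {f g : X → ℝ} (hf : IsBoundedFun f)
    (hg : IsBoundedFun g) : IsBoundedFun (fun x => f x - g x) := by
  obtain ⟨C, hC⟩ := hf; obtain ⟨D, hD⟩ := hg
  exact ⟨C + D, fun x => (abs_sub _ _).trans (add_le_add (hC x) (hD x))⟩

lemma IsBoundedFun.add {X : Type*} {f g : X → ℝ} (hf : IsBoundedFun f)
    (hg : IsBoundedFun g) : IsBoundedFun (fun x => f x + g x) := by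
  obtain ⟨C, hC⟩ := hf; obtain ⟨D, hD⟩ := hg
  exact ⟨C + D, fun x => (abs_add_le _ _).trans (add_le_add (hC x) (hD x))⟩

/-- If `N` is a `1`-stage `ν`-span contraction on bounded functions and
`(u t)` is a sequence of bounded functions with `‖u (t+1) - N (u t)‖_∞ ≤ ε`, then
`sp(u (t+1) - u t) ≤ ν^t (sp(N u₀ - u₀) + 2ε) + 4ε (1 - ν^t)/(1-ν)` for all `t`. -/
theorem stmt_7 {X : Type*} [Nonempty X] (ν : ℝ) (hν : ν ∈ Set.Ico (0 : ℝ) 1)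
    (N : (X → ℝ) → (X → ℝ))
    (hNb : ∀ f, IsBoundedFun f → IsBoundedFun (N f))
    (hN : ∀ u v, IsBoundedFun u → IsBoundedFun v →
      spanSeminorm (fun x => N u x - N v x) ≤ ν * spanSeminorm (fun x => u x - v x))
    (ε : ℝ) (hε : 0 ≤ ε)
    (u : ℕ → X → ℝ) (hub : ∀ t, IsBoundedFun (u t))
    (hu : ∀ t x, |u (t + 1) x - N (u t) x| ≤ ε) :
    ∀ t : ℕ, spanSeminorm (fun x => u (t + 1) x - u t x) ≤
      ν ^ t * (spanSeminorm (fun x => N (u 0) x - u 0 x) + 2 * ε) +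
        4 * ε * (1 - ν ^ t) / (1 - ν) := by
  obtain ⟨hν0, hν1⟩ := hν
  have hd : (0:ℝ) < 1 - ν := by linarith
  intro t
  induction t with
  | zero =>
    simp only [pow_zero, one_mul, sub_self, mul_zero, zero_div, add_zero]
    have heq : (fun x => u 1 x - u 0 x) =
        fun x => (u 1 x - N (u 0) x) + (N (u 0) x - u 0 x) := by funext x; ring
    rw [heq]
    have h1 := span_add_le (X := X)
      (f := fun x => u 1 x - N (u 0) x) (g := fun x => N (u 0) x - u 0 x)
      ((hub 1).sub (hNb _ (hub 0))) ((hNb _ (hub 0)).sub (hub 0))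
    have h2 := span_le_of_abs_le (X := X) (f := fun x => u 1 x - N (u 0) x) (hu 0)
    linarith
  | succ t ih =>
    have heq : (fun x => u (t + 1 + 1) x - u (t + 1) x) =
        fun x => (u (t + 2) x - N (u (t + 1)) x) +
          ((N (u (t + 1)) x - N (u t) x) + (N (u t) x - u (t + 1) x)) := by
      funext x; ring
    rw [heq]
    have hb1 : IsBoundedFun (fun x => u (t + 2) x - N (u (t + 1)) x) :=
      (hub (t + 2)).sub (hNb _ (hub (t + 1)))
    have hb2 : IsBoundedFun (fun x => N (u (t + 1)) x - N (u t) x) :=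
      (hNb _ (hub (t + 1))).sub (hNb _ (hub t))
    have hb3 : IsBoundedFun (fun x => N (u t) x - u (t + 1) x) :=
      (hNb _ (hub t)).sub (hub (t + 1))
    have h1 := span_add_le (X := X) hb1 (hb2.add hb3)
    have h2 := span_add_le (X := X) hb2 hb3
    have h3 := span_le_of_abs_le (X := X) (hu (t + 1))
    have h4 : spanSeminorm (fun x => N (u t) x - u (t + 1) x) ≤ 2 * ε := by
      refine span_le_of_abs_le fun x => ?_
      rw [abs_sub_comm]; exact hu t x
    have h5 := hN (u (t + 1)) (u t) (hub (t + 1)) (hub t)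
    have h6 : ν * spanSeminorm (fun x => u (t + 1) x - u t x) ≤
        ν * (ν ^ t * (spanSeminorm (fun x => N (u 0) x - u 0 x) + 2 * ε) +
          4 * ε * (1 - ν ^ t) / (1 - ν)) := mul_le_mul_of_nonneg_left ih hν0
    have key : 4 * ε * (1 - ν ^ t * ν) / (1 - ν) =
        ν * (4 * ε * (1 - ν ^ t) / (1 - ν)) + 4 * ε := by
      field_simp
      ring
    rw [pow_succ]
    calc spanSeminorm (fun x => (u (t + 2) x - N (u (t + 1)) x) +
          ((N (u (t + 1)) x - N (u t) x) + (N (u t) x - u (t + 1) x)))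
        ≤ 2 * ε + (ν * spanSeminorm (fun x => u (t + 1) x - u t x) + 2 * ε) := by
          linarith
      _ ≤ _ := by rw [key]; nlinarith [h6, mul_add ν (ν ^ t * (spanSeminorm (fun x => N (u 0) x - u 0 x) + 2 * ε)) (4 * ε * (1 - ν ^ t) / (1 - ν))]
end

section
/- Let X be a nonempty measurable space, P a Markov kernel from X to X, r : X → ℝ a bounded measurable function, and u, u' : X → ℝ bounded measurable functions. Let ε_u, ε_s ≥ 0 and assume: (i) |u'(x) − (r(x) + ∫_X u(y) P(x)(dy))| ≤ ε_u for all x ∈ X, and (ii) sp(u' − u) ≤ ε_s, where sp(w) := sup_x w(x) − inf_x w(x). Define g^ε := (sup_{x∈X}(u'(x) − u(x)) + inf_{x∈X}(u'(x) − u(x)))/2. Suppose that for each x ∈ X there is a probability measure μ_x on X that is invariant under P (i.e., the measure obtained by first sampling from μ_x and then taking a step of P equals μ_x), and set g(x) := ∫_X r dμ_x. Then |g(x) − g^ε| ≤ ε_u + ε_s/2 for every x ∈ X. -/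
open MeasureTheory ProbabilityTheory

lemma my_integrable_of_bound {X : Type*} [MeasurableSpace X] {ν : Measure X}
    [IsFiniteMeasure ν] {f : X → ℝ} (hf : AEStronglyMeasurable f ν) (C : ℝ)
    (h : ∀ x, |f x| ≤ C) : Integrable f ν :=
  Integrable.mono' (integrable_const C) hf (ae_of_all _ h)

lemma my_integral_bind {X : Type*} [MeasurableSpace X] (ν : Measure X)
    [IsProbabilityMeasure ν] (P : Kernel X X) [IsMarkovKernel P]
    {f : X → ℝ} (hfm : Measurable f) {C : ℝ} (hfb : ∀ x, |f x| ≤ C) :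
    ∫ z, f z ∂(ν.bind (fun y => P y)) = ∫ y, ∫ z, f z ∂(P y) ∂ν := by
  have hsnd : ν.bind (fun y => P y) = (ν.compProd P).snd := by
    ext s hs
    rw [Measure.bind_apply hs (P.measurable.aemeasurable), Measure.snd_apply hs,
      Measure.compProd_apply (measurable_snd hs)]
    rfl
  have hint : Integrable (fun p : X × X => f p.2) (ν.compProd P) :=
    my_integrable_of_bound ((hfm.comp measurable_snd).aestronglyMeasurable) C
      (fun p => hfb p.2)
  rw [hsnd, Measure.snd, integral_map measurable_snd.aemeasurable hfm.aestronglyMeasurable,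
    Measure.integral_compProd hint]

lemma my_abs_integral_le {X : Type*} [MeasurableSpace X] (ν : Measure X)
    [IsProbabilityMeasure ν] {f : X → ℝ} {C : ℝ} (h : ∀ x, |f x| ≤ C) :
    |∫ y, f y ∂ν| ≤ C := by
  calc |∫ y, f y ∂ν| = ‖∫ y, f y ∂ν‖ := rfl
    _ ≤ C * (ν Set.univ).toReal := norm_integral_le_of_norm_le_const (ae_of_all _ h)
    _ = C := by simp

/-- Let `P` be a Markov kernel, `r` a bounded measurable reward, and
`u, u'` bounded measurable with `|u' x - (r x + ∫ u dP(x))| ≤ ε_u` for all `x` and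
`sp(u' - u) ≤ ε_s`. Set `g^ε = (sup (u' - u) + inf (u' - u))/2`. If each `μ x` is a
probability measure invariant under `P` and `g x = ∫ r dμ x`, then
`|g x - g^ε| ≤ ε_u + ε_s / 2` for every `x`. -/
theorem stmt_8 {X : Type*} [MeasurableSpace X] [Nonempty X]
    (P : Kernel X X) [IsMarkovKernel P]
    (r : X → ℝ) (hrm : Measurable r) (hrb : ∃ C, ∀ x, |r x| ≤ C)
    (u u' : X → ℝ) (hum : Measurable u) (hub : ∃ C, ∀ x, |u x| ≤ C)
    (hu'm : Measurable u') (hu'b : ∃ C, ∀ x, |u' x| ≤ C)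
    (εu εs : ℝ) (hεu : 0 ≤ εu) (hεs : 0 ≤ εs)
    (h1 : ∀ x, |u' x - (r x + ∫ y, u y ∂(P x))| ≤ εu)
    (h2 : (⨆ x, (u' x - u x)) - ⨅ x, (u' x - u x) ≤ εs)
    (μ : X → Measure X) [∀ x, IsProbabilityMeasure (μ x)]
    (hinv : ∀ x, (μ x).bind (fun y => P y) = μ x)
    (g : X → ℝ) (hg : ∀ x, g x = ∫ y, r y ∂(μ x)) :
    ∀ x : X, |g x - ((⨆ x, (u' x - u x)) + ⨅ x, (u' x - u x)) / 2| ≤ εu + εs / 2 := by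
  intro x
  obtain ⟨Cr, hCr⟩ := hrb
  obtain ⟨Cu, hCu⟩ := hub
  obtain ⟨Cu', hCu'⟩ := hu'b
  set ν := μ x with hν
  set d : X → ℝ := fun y => u' y - u y with hd
  set S := ⨆ y, d y with hS
  set I := ⨅ y, d y with hI
  -- measurability of y ↦ ∫ u dP y
  have hIm : StronglyMeasurable fun y => ∫ z, u z ∂(P y) :=
    StronglyMeasurable.integral_kernel_prod_right
      (f := fun _ z => u z) (hum.comp measurable_snd).stronglyMeasurable
  have hIb : ∀ y, |∫ z, u z ∂(P y)| ≤ Cu := fun y => my_abs_integral_le _ hCu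
  -- integrability over ν
  have hint_r : Integrable r ν := my_integrable_of_bound hrm.aestronglyMeasurable Cr hCr
  have hint_u : Integrable u ν := my_integrable_of_bound hum.aestronglyMeasurable Cu hCu
  have hint_u' : Integrable u' ν := my_integrable_of_bound hu'm.aestronglyMeasurable Cu' hCu'
  have hint_I : Integrable (fun y => ∫ z, u z ∂(P y)) ν :=
    my_integrable_of_bound hIm.aestronglyMeasurable Cu hIb
  have hint_d : Integrable d ν := hint_u'.sub hint_u
  -- invariance
  have hinv' : ∫ z, u z ∂ν = ∫ y, ∫ z, u z ∂(P y) ∂ν := by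
    conv_lhs => rw [hν, ← hinv x]
    exact my_integral_bind (μ x) P hum hCu
  -- key estimate |∫ d dν - g x| ≤ εu
  have hkey : |(∫ y, d y ∂ν) - g x| ≤ εu := by
    have heq : ∫ y, (u' y - (r y + ∫ z, u z ∂(P y))) ∂ν = (∫ y, d y ∂ν) - g x := by
      have hint_v : Integrable (fun y => r y + ∫ z, u z ∂(P y)) ν := hint_r.add hint_I
      rw [integral_sub hint_u' hint_v, integral_add hint_r hint_I, ← hinv', hg x, integral_sub hint_u' hint_u]
      ring
    rw [← heq]
    exact my_abs_integral_le _ h1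
  -- bounds on ∫ d
  have hbddA : BddAbove (Set.range d) := ⟨Cu' + Cu, by
    rintro _ ⟨y, rfl⟩
    have := abs_le.1 (hCu' y); have := abs_le.1 (hCu y)
    simp only [hd]; linarith⟩
  have hbddB : BddBelow (Set.range d) := ⟨-(Cu' + Cu), by
    rintro _ ⟨y, rfl⟩
    have := abs_le.1 (hCu' y); have := abs_le.1 (hCu y)
    simp only [hd]; linarith⟩
  have hdS : ∀ y, d y ≤ S := fun y => le_ciSup hbddA y
  have hId : ∀ y, I ≤ d y := fun y => ciInf_le hbddB y
  have hintS : (∫ y, d y ∂ν) ≤ S := by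
    calc (∫ y, d y ∂ν) ≤ ∫ _, S ∂ν := integral_mono hint_d (integrable_const S) hdS
      _ = S := by simp
  have hintI : I ≤ ∫ y, d y ∂ν := by
    calc I = ∫ _, I ∂ν := by simp
      _ ≤ ∫ y, d y ∂ν := integral_mono (integrable_const I) hint_d hId
  -- combine
  have h3 : |(∫ y, d y ∂ν) - (S + I) / 2| ≤ εs / 2 := by
    rw [abs_le]; constructor <;> linarith
  have h4 := abs_le.1 hkey
  have h5 := abs_le.1 h3
  rw [abs_le]
  constructor <;> linarith
end

section
/- Let X be a nonempty measurable space, A a nonempty finite set, and for each a ∈ A let P_a be a Markov kernel from X to X and r_a : X → ℝ a bounded measurable function. Define the optimal Bellman operator (L u)(x) := max_{a∈A} ( r_a(x) + ∫_X u(y) P_a(x)(dy) ) for bounded measurable u. Let u, u' : X → ℝ be bounded measurable, ε_u, ε_s ≥ 0 with ‖u' − L u‖_∞ ≤ ε_u and sp(u' − u) ≤ ε_s, and set g^ε := (sup_{x}(u'(x) − u(x)) + inf_{x}(u'(x) − u(x)))/2. Let Q be a Markov kernel from X to X and ρ : X → ℝ a bounded measurable function such that ρ(x) + ∫_X u(y)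 Q(x)(dy) ≤ (L u)(x) for all x ∈ X, and let μ be a probability measure on X invariant under Q. Then ∫_X ρ dμ ≤ g^ε + ε_u + ε_s/2. -/
open MeasureTheory ProbabilityTheory

/-- With the optimal Bellman operator
`(L u) x = max_{a} (r a x + ∫ u d(P_a x))` over a nonempty finite action set, suppose
`‖u' - L u‖_∞ ≤ ε_u` and `sp(u' - u) ≤ ε_s`, and set
`g^ε = (sup (u' - u) + inf (u' - u))/2`. If `Q` is a Markov kernel and `ρ` is bounded
measurable with `ρ x + ∫ u d(Q x) ≤ (L u) x` for all `x`, and `μ` is a probability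
measure invariant under `Q`, then `∫ ρ dμ ≤ g^ε + ε_u + ε_s / 2`. -/
theorem stmt_9 {X A : Type*} [MeasurableSpace X] [Nonempty X] [Fintype A] [Nonempty A]
    (P : A → Kernel X X) [∀ a, IsMarkovKernel (P a)]
    (r : A → X → ℝ) (hrm : ∀ a, Measurable (r a)) (hrb : ∀ a, ∃ C, ∀ x, |r a x| ≤ C)
    (u u' : X → ℝ) (hum : Measurable u) (hub : ∃ C, ∀ x, |u x| ≤ C)
    (hu'm : Measurable u') (hu'b : ∃ C, ∀ x, |u' x| ≤ C)
    (Lu : X → ℝ) (hLu : ∀ x, Lu x = ⨆ a : A, (r a x + ∫ y, u y ∂(P a x)))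
    (εu εs : ℝ) (hεu : 0 ≤ εu) (hεs : 0 ≤ εs)
    (h1 : ∀ x, |u' x - Lu x| ≤ εu)
    (h2 : (⨆ x, (u' x - u x)) - ⨅ x, (u' x - u x) ≤ εs)
    (Q : Kernel X X) [IsMarkovKernel Q]
    (ρ : X → ℝ) (hρm : Measurable ρ) (hρb : ∃ C, ∀ x, |ρ x| ≤ C)
    (hρ : ∀ x, ρ x + ∫ y, u y ∂(Q x) ≤ Lu x)
    (μ : Measure X) [IsProbabilityMeasure μ]
    (hinv : μ.bind (fun y => Q y) = μ) :
    ∫ x, ρ x ∂μ ≤ ((⨆ x, (u' x - u x)) + ⨅ x, (u' x - u x)) / 2 + εu + εs / 2 := by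
  obtain ⟨Cu, hCu⟩ := hub
  obtain ⟨Cu', hCu'⟩ := hu'b
  obtain ⟨Cρ, hCρ⟩ := hρb
  -- integrabilities
  have hIu : Integrable u μ :=
    (integrable_const Cu).mono' hum.aestronglyMeasurable
      (Filter.Eventually.of_forall fun x => by simpa using hCu x)
  have hIu' : Integrable u' μ :=
    (integrable_const Cu').mono' hu'm.aestronglyMeasurable
      (Filter.Eventually.of_forall fun x => by simpa using hCu' x)
  have hIρ : Integrable ρ μ :=
    (integrable_const Cρ).mono' hρm.aestronglyMeasurable
      (Filter.Eventually.of_forall fun x => by simpa using hCρ x)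
  -- the function x ↦ ∫ u d(Q x)
  have hQm : Measurable fun x => ∫ y, u y ∂(Q x) := by
    have : StronglyMeasurable fun (p : X × X) => u p.2 :=
      (hum.comp measurable_snd).stronglyMeasurable
    exact (this.integral_kernel_prod_right').measurable
  have hQb : ∀ x, |∫ y, u y ∂(Q x)| ≤ Cu := fun x => by
    have ha : |∫ y, u y ∂(Q x)| ≤ ∫ y, |u y| ∂(Q x) := by
      simpa [Real.norm_eq_abs] using norm_integral_le_integral_norm (μ := Q x) u
    have hb : ∫ y, |u y| ∂(Q x) ≤ ∫ _, Cu ∂(Q x) :=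
      integral_mono_of_nonneg (Filter.Eventually.of_forall fun y => abs_nonneg _)
        (integrable_const Cu) (Filter.Eventually.of_forall fun y => hCu y)
    have hc : ∫ (_ : X), Cu ∂(Q x) = Cu := by simp
    linarith
  have hIQ : Integrable (fun x => ∫ y, u y ∂(Q x)) μ :=
    (integrable_const Cu).mono' hQm.aestronglyMeasurable
      (Filter.Eventually.of_forall fun x => by simpa using hQb x)
  -- invariance: ∫ (∫ u dQx) dμ = ∫ u dμ
  have hsnd : (μ ⊗ₘ Q).snd = μ := by
    have : (μ ⊗ₘ Q).snd = μ.bind fun y => Q y := by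
      ext s hs
      rw [Measure.snd_apply hs, Measure.compProd_apply (measurable_snd hs),
        Measure.bind_apply hs Q.measurable.aemeasurable]
      rfl
    rw [this, hinv]
  have hI2 : Integrable (fun p : X × X => u p.2) (μ ⊗ₘ Q) :=
    (integrable_const Cu).mono' (hum.comp measurable_snd).aestronglyMeasurable
      (Filter.Eventually.of_forall fun p => by simpa using hCu p.2)
  have hkey : ∫ x, (∫ y, u y ∂(Q x)) ∂μ = ∫ y, u y ∂μ := by
    rw [← Measure.integral_compProd hI2]
    have : ∫ p : X × X, u p.2 ∂(μ ⊗ₘ Q) = ∫ y, u y ∂((μ ⊗ₘ Q).snd) := by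
      rw [Measure.snd, integral_map measurable_snd.aemeasurable hum.aestronglyMeasurable]
    rw [this, hsnd]
  -- ρ x ≤ Lu x - ∫ u dQx ≤ u' x + εu - ∫ u dQx
  have hpt : ∀ x, ρ x ≤ u' x + εu - ∫ y, u y ∂(Q x) := fun x => by
    have := hρ x
    have h1x := (abs_le.mp (h1 x)).1
    linarith
  -- integrate
  have hint : ∫ x, ρ x ∂μ ≤ ∫ x, (u' x - u x) ∂μ + εu := by
    have hIsum : Integrable (fun x => u' x + εu) μ := hIu'.add (integrable_const εu)
    have this1 : ∫ x, ρ x ∂μ ≤ ∫ x, (u' x + εu - ∫ y, u y ∂(Q x)) ∂μ :=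
      integral_mono hIρ (hIsum.sub hIQ) hpt
    have e1 : ∫ x, (u' x + εu - ∫ y, u y ∂(Q x)) ∂μ
        = (∫ x, (u' x + εu) ∂μ) - ∫ x, (∫ y, u y ∂(Q x)) ∂μ := integral_sub hIsum hIQ
    have e2 : ∫ x, (u' x + εu) ∂μ = (∫ x, u' x ∂μ) + εu := by
      rw [integral_add hIu' (integrable_const εu)]; simp
    have e3 : ∫ x, (u' x - u x) ∂μ = (∫ x, u' x ∂μ) - ∫ x, u x ∂μ := integral_sub hIu' hIu
    rw [e1, e2, hkey] at this1
    linarith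
  -- sup bound
  have hbdd : BddAbove (Set.range fun x => u' x - u x) := by
    refine ⟨Cu' + Cu, ?_⟩
    rintro _ ⟨x, rfl⟩
    have := abs_le.mp (hCu x); have := abs_le.mp (hCu' x)
    dsimp; linarith
  have hsup : ∀ x, u' x - u x ≤ ⨆ x, (u' x - u x) := fun x => le_ciSup hbdd x
  have hint2 : ∫ x, (u' x - u x) ∂μ ≤ ⨆ x, (u' x - u x) := by
    calc ∫ x, (u' x - u x) ∂μ ≤ ∫ _, (⨆ x, (u' x - u x)) ∂μ :=
          integral_mono (hIu'.sub hIu) (integrable_const _) hsup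
    _ = ⨆ x, (u' x - u x) := by simp
  have hfin : (⨆ x, (u' x - u x)) ≤ ((⨆ x, (u' x - u x)) + ⨅ x, (u' x - u x)) / 2 + εs / 2 := by
    linarith
  linarith
end

section
/- Let (Ω, F, P) be a probability space, X a measurable space, p a probability measure on X, u : X → ℝ a bounded measurable function, m a positive integer, and X_1, ..., X_m : Ω → X independent random variables each with law p. Let δ ∈ (0,1), set θ := (1/m)·ln(4/δ), and assume 2θ ≤ 1. Define the empirical variance σ̃ := (1/m)·∑_{i=1}^m u(X_i)² − ((1/m)·∑_{i=1}^m u(X_i))² and the true variance σ := ∫_X u² dp − (∫_X u dp)². Then with probability at least 1 − δ, |σ̃ − σ| ≤ 4·√(2θ)·‖u‖_∞². -/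
open MeasureTheory ProbabilityTheory

lemma aux_sinh_le (s : ℝ) (hs : 0 ≤ s) : Real.sinh s ≤ s * Real.cosh s := by
  have key : ∀ x : ℝ, HasDerivAt (fun y => y * Real.cosh y - Real.sinh y)
      (x * Real.sinh x) x := by
    intro x
    have h1 : HasDerivAt (fun y : ℝ => y * Real.cosh y)
        (1 * Real.cosh x + x * Real.sinh x) x :=
      (hasDerivAt_id x).mul (Real.hasDerivAt_cosh x)
    have h2 := h1.sub (Real.hasDerivAt_sinh x)
    exact h2.congr_deriv (by ring)
  have mono : MonotoneOn (fun y => y * Real.cosh y - Real.sinh y) (Set.Ici 0) := by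
    apply monotoneOn_of_deriv_nonneg (convex_Ici 0)
    · exact (Continuous.sub (continuous_id.mul Real.continuous_cosh)
        Real.continuous_sinh).continuousOn
    · intro x _
      exact (key x).differentiableAt.differentiableWithinAt
    · intro x hx
      rw [interior_Ici] at hx
      rw [(key x).deriv]
      exact mul_nonneg (le_of_lt hx) (Real.sinh_nonneg_iff.2 (le_of_lt hx))
  have := mono (Set.self_mem_Ici) (Set.mem_Ici.2 hs) hs
  simpa using this

lemma aux_sinh_lt_cosh (s : ℝ) : |Real.sinh s| < Real.cosh s := by
  have h := Real.cosh_sq s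
  have h2 := Real.cosh_pos s
  rw [abs_lt]
  constructor <;> nlinarith [sq_nonneg (Real.sinh s + Real.cosh s), sq_nonneg (Real.sinh s - Real.cosh s)]

lemma aux_pos (q s : ℝ) (hq : |q| ≤ 1) : 0 < Real.cosh s + q * Real.sinh s := by
  have h := aux_sinh_lt_cosh s
  rcases abs_le.1 hq with ⟨h1, h2⟩
  rcases abs_lt.1 h with ⟨h3, h4⟩
  nlinarith [abs_nonneg (Real.sinh s), le_abs_self (Real.sinh s), neg_abs_le (Real.sinh s)]

lemma aux_key (q s : ℝ) (hq : |q| ≤ 1) :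
    Real.cosh s + q * Real.sinh s ≤ Real.exp (q * s + s ^ 2) := by
  -- reduce to s ≥ 0 by symmetry
  suffices H : ∀ q s : ℝ, |q| ≤ 1 → 0 ≤ s →
      Real.cosh s + q * Real.sinh s ≤ Real.exp (q * s + s ^ 2) by
    rcases le_total 0 s with hs | hs
    · exact H q s hq hs
    · have := H (-q) (-s) (by rwa [abs_neg]) (by linarith)
      simpa [Real.cosh_neg, Real.sinh_neg] using this
  clear hq q s
  intro q s hq hs
  have hpos : ∀ x : ℝ, 0 < Real.cosh x + q * Real.sinh x := fun x => aux_pos q x hq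
  set f : ℝ → ℝ := fun x => q * x + x ^ 2 - Real.log (Real.cosh x + q * Real.sinh x) with hf
  have hderiv : ∀ x : ℝ, HasDerivAt f
      (q + 2 * x - (Real.sinh x + q * Real.cosh x) / (Real.cosh x + q * Real.sinh x)) x := by
    intro x
    have h1 : HasDerivAt (fun y : ℝ => Real.cosh y + q * Real.sinh y)
        (Real.sinh x + q * Real.cosh x) x :=
      (Real.hasDerivAt_cosh x).add ((Real.hasDerivAt_sinh x).const_mul q)
    have h2 := (Real.hasDerivAt_log (hpos x).ne').comp x h1
    have h3 : HasDerivAt (fun y : ℝ => q * y + y ^ 2) (q + 2 * x) x := by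
      have := ((hasDerivAt_id x).const_mul q).add (hasDerivAt_pow 2 x)
      exact this.congr_deriv (by norm_num)
    have := h3.sub h2
    exact this.congr_deriv (by rw [div_eq_inv_mul])
  have hd_nonneg : ∀ x : ℝ, 0 ≤ x →
      0 ≤ q + 2 * x - (Real.sinh x + q * Real.cosh x) / (Real.cosh x + q * Real.sinh x) := by
    intro x hx
    rw [sub_nonneg, div_le_iff₀ (hpos x)]
    have hc1 : (1 : ℝ) ≤ Real.cosh x := Real.one_le_cosh x
    have hs0 : 0 ≤ Real.sinh x := Real.sinh_nonneg_iff.2 hx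
    have hsc : Real.sinh x ≤ Real.cosh x := (le_abs_self _).trans (aux_sinh_lt_cosh x).le
    have hsx : Real.sinh x ≤ x * Real.cosh x := aux_sinh_le x hx
    rcases abs_le.1 hq with ⟨h1, h2⟩
    rcases le_total x 1 with hx1 | hx1
    · nlinarith [sq_nonneg (q + x), mul_nonneg hx (mul_nonneg hx hs0),
        mul_nonneg (mul_nonneg hx hx) (Real.cosh_pos x).le]
    · rcases le_total 0 (q ^ 2 - 1 + 2 * x * q) with hco | hco
      · nlinarith [mul_nonneg hco hs0, mul_nonneg (mul_nonneg hx (Real.cosh_pos x).le) hx]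
      · nlinarith [mul_nonneg (by linarith : (0:ℝ) ≤ -(q ^ 2 - 1 + 2 * x * q))
          (by linarith : 0 ≤ Real.cosh x - Real.sinh x),
          mul_nonneg (mul_nonneg (by linarith : (0:ℝ) ≤ 1 + q)
            (by linarith : (0:ℝ) ≤ q - 1 + 2 * x)) (Real.cosh_pos x).le]
  have mono : MonotoneOn f (Set.Ici 0) := by
    apply monotoneOn_of_deriv_nonneg (convex_Ici 0)
    · refine Continuous.continuousOn ?_
      have hc : Continuous fun x : ℝ => Real.cosh x + q * Real.sinh x :=
        Real.continuous_cosh.add (continuous_const.mul Real.continuous_sinh)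
      exact ((continuous_const.mul continuous_id).add (continuous_pow 2)).sub
        (hc.log fun x => (hpos x).ne')
    · intro x _; exact (hderiv x).differentiableAt.differentiableWithinAt
    · intro x hx
      rw [interior_Ici] at hx
      rw [(hderiv x).deriv]
      exact hd_nonneg x hx.le
  have h0 : f 0 = 0 := by simp [hf]
  have hfs : 0 ≤ f s := by
    have := mono Set.self_mem_Ici (Set.mem_Ici.2 hs) hs
    rwa [h0] at this
  have hlog : Real.log (Real.cosh s + q * Real.sinh s) ≤ q * s + s ^ 2 := by
    simp only [hf] at hfs; linarith
  calc Real.cosh s + q * Real.sinh s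
      = Real.exp (Real.log (Real.cosh s + q * Real.sinh s)) := (Real.exp_log (hpos s)).symm
    _ ≤ Real.exp (q * s + s ^ 2) := Real.exp_le_exp.2 hlog

lemma aux_mgf {Ω : Type*} [MeasurableSpace Ω] (P : Measure Ω) [IsProbabilityMeasure P]
    (Y : Ω → ℝ) (hYm : Measurable Y) (c : ℝ) (hc : 0 < c) (hYb : ∀ ω, |Y ω| ≤ c) (t : ℝ) :
    ∫ ω, Real.exp (t * (Y ω - ∫ ω', Y ω' ∂P)) ∂P ≤ Real.exp (t ^ 2 * c ^ 2) := by
  have hYint : Integrable Y P :=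
    (integrable_const c).mono' hYm.aestronglyMeasurable
      (Filter.Eventually.of_forall fun ω => by simpa using hYb ω)
  set μY := ∫ ω', Y ω' ∂P with hμY
  have hμ : |μY| ≤ c := by
    have h1 := norm_integral_le_integral_norm (μ := P) Y
    have h2 : ∫ ω, ‖Y ω‖ ∂P ≤ c := by
      rw [show (c:ℝ) = ∫ _ω : Ω, c ∂P by simp]
      exact integral_mono hYint.norm (integrable_const c) fun ω => by simpa using hYb ω
    simpa using h1.trans h2
  -- pointwise convexity bound
  have hpt : ∀ ω, Real.exp (t * Y ω) ≤
      Real.cosh (t * c) + (Y ω / c) * Real.sinh (t * c) := by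
    intro ω
    have ha : (0:ℝ) ≤ (c - Y ω) / (2 * c) := by
      apply div_nonneg _ (by linarith)
      have := (abs_le.1 (hYb ω)).2; linarith
    have hb : (0:ℝ) ≤ (c + Y ω) / (2 * c) := by
      apply div_nonneg _ (by linarith)
      have := (abs_le.1 (hYb ω)).1; linarith
    have hab : (c - Y ω) / (2 * c) + (c + Y ω) / (2 * c) = 1 := by field_simp; ring
    have hcx := convexOn_exp.2 (Set.mem_univ (-(t * c))) (Set.mem_univ (t * c)) ha hb hab
    simp only [smul_eq_mul] at hcx
    have harg : (c - Y ω) / (2 * c) * -(t * c) + (c + Y ω) / (2 * c) * (t * c) = t * Y ω := by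
      field_simp; ring
    rw [harg] at hcx
    refine hcx.trans (le_of_eq ?_)
    rw [Real.cosh_eq, Real.sinh_eq]
    field_simp
    ring
  -- integrate
  have hint1 : Integrable (fun ω => Real.exp (t * Y ω)) P := by
    refine (integrable_const (Real.exp (|t| * c))).mono'
      ((hYm.const_mul t).exp).aestronglyMeasurable
      (Filter.Eventually.of_forall fun ω => ?_)
    rw [Real.norm_eq_abs, Real.abs_exp]
    apply Real.exp_le_exp.2
    calc t * Y ω ≤ |t * Y ω| := le_abs_self _
    _ = |t| * |Y ω| := abs_mul _ _
    _ ≤ |t| * c := mul_le_mul_of_nonneg_left (hYb ω) (abs_nonneg t)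
  have hint2 : Integrable (fun ω => Real.cosh (t * c) + (Y ω / c) * Real.sinh (t * c)) P := by
    apply (integrable_const _).add
    simp_rw [div_mul_eq_mul_div]
    exact (hYint.mul_const _).div_const _
  have hstep : ∫ ω, Real.exp (t * Y ω) ∂P ≤
      Real.cosh (t * c) + (μY / c) * Real.sinh (t * c) := by
    calc ∫ ω, Real.exp (t * Y ω) ∂P
        ≤ ∫ ω, (Real.cosh (t * c) + (Y ω / c) * Real.sinh (t * c)) ∂P :=
          integral_mono hint1 hint2 hpt
      _ = Real.cosh (t * c) + (μY / c) * Real.sinh (t * c) := by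
          rw [integral_add (integrable_const _)]
          · simp only [integral_const, probReal_univ, smul_eq_mul, one_mul]
            congr 1
            simp_rw [div_mul_eq_mul_div]
            rw [integral_div]
            congr 1
            exact integral_mul_const _ _
          · simp_rw [div_mul_eq_mul_div]
            exact (hYint.mul_const _).div_const _
  have hkey := aux_key (μY / c) (t * c) (by rw [abs_div, abs_of_pos hc, div_le_one hc]; exact hμ)
  have hfin : ∫ ω, Real.exp (t * Y ω) ∂P ≤ Real.exp (t * μY + t ^ 2 * c ^ 2) := by
    refine (hstep.trans hkey).trans (le_of_eq ?_)
    congr 1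
    field_simp
  calc ∫ ω, Real.exp (t * (Y ω - μY)) ∂P
      = ∫ ω, Real.exp (t * Y ω) / Real.exp (t * μY) ∂P := by
        congr 1; ext ω; rw [← Real.exp_sub]; ring_nf
    _ = (∫ ω, Real.exp (t * Y ω) ∂P) / Real.exp (t * μY) := integral_div _ _
    _ ≤ Real.exp (t * μY + t ^ 2 * c ^ 2) / Real.exp (t * μY) := by
        gcongr
    _ = Real.exp (t ^ 2 * c ^ 2) := by rw [← Real.exp_sub]; ring_nf

lemma aux_tail {Ω : Type*} [MeasurableSpace Ω] (P : Measure Ω) [IsProbabilityMeasure P]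
    {m : ℕ} (W : Fin m → Ω → ℝ) (hWm : ∀ j, Measurable (W j))
    (hindep : iIndepFun W P)
    (c : ℝ) (hc : 0 < c) (hWb : ∀ j ω, |W j ω| ≤ c)
    (μ0 : ℝ) (hμ : ∀ j, ∫ ω, W j ω ∂P = μ0)
    (ε : ℝ) (hε : 0 ≤ ε) :
    P {ω | (m : ℝ) * ε ≤ ∑ j, (W j ω - μ0)} ≤
      ENNReal.ofReal (Real.exp (-((m : ℝ) * ε ^ 2 / (4 * c ^ 2)))) := by
  set V : Fin m → Ω → ℝ := fun j ω => W j ω - μ0 with hV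
  have hVm : ∀ j, Measurable (V j) := fun j => (hWm j).sub_const μ0
  have hVindep : iIndepFun V P :=
    hindep.comp (fun _ x => x - μ0) (fun _ => measurable_id.sub_const μ0)
  set t : ℝ := ε / (2 * c ^ 2) with htdef
  have ht : 0 ≤ t := div_nonneg hε (by positivity)
  have hVint : ∀ j, Integrable (fun ω => Real.exp (t * V j ω)) P := by
    intro j
    refine (integrable_const (Real.exp (|t| * (c + |μ0|)))).mono'
      (((hVm j).const_mul t).exp).aestronglyMeasurable
      (Filter.Eventually.of_forall fun ω => ?_)
    rw [Real.norm_eq_abs, Real.abs_exp]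
    apply Real.exp_le_exp.2
    calc t * V j ω ≤ |t * V j ω| := le_abs_self _
      _ = |t| * |V j ω| := abs_mul _ _
      _ ≤ |t| * (c + |μ0|) := by
          apply mul_le_mul_of_nonneg_left _ (abs_nonneg t)
          calc |V j ω| = |W j ω - μ0| := rfl
            _ ≤ |W j ω| + |μ0| := abs_sub _ _
            _ ≤ c + |μ0| := by have := hWb j ω; linarith
  have hZint : Integrable (fun ω => Real.exp (t * (∑ j, V j) ω)) P :=
    hVindep.integrable_exp_mul_sum hVm (fun j _ => hVint j)
  have hch := measure_ge_le_exp_mul_mgf (μ := P) (X := ∑ j, V j) ((m : ℝ) * ε) ht hZint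
  have hmgf : mgf (∑ j, V j) P t ≤ Real.exp ((m : ℝ) * (t ^ 2 * c ^ 2)) := by
    rw [hVindep.mgf_sum hVm]
    calc ∏ j, mgf (V j) P t ≤ ∏ _j : Fin m, Real.exp (t ^ 2 * c ^ 2) := by
          apply Finset.prod_le_prod (fun j _ => mgf_nonneg) (fun j _ => ?_)
          have h1 := aux_mgf P (W j) (hWm j) c hc (hWb j) t
          rw [hμ j] at h1
          exact h1
      _ = Real.exp ((m : ℝ) * (t ^ 2 * c ^ 2)) := by
          rw [Finset.prod_const, Finset.card_univ, Fintype.card_fin, ← Real.exp_nat_mul]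
  have hreal : Real.exp (-t * ((m : ℝ) * ε)) * Real.exp ((m : ℝ) * (t ^ 2 * c ^ 2)) =
      Real.exp (-((m : ℝ) * ε ^ 2 / (4 * c ^ 2))) := by
    rw [← Real.exp_add]
    congr 1
    rw [htdef]
    field_simp
    ring
  have hfinal : (P {ω | (m : ℝ) * ε ≤ (∑ j, V j) ω}).toReal ≤
      Real.exp (-((m : ℝ) * ε ^ 2 / (4 * c ^ 2))) := by
    refine hch.trans ?_
    rw [← hreal]
    exact mul_le_mul_of_nonneg_left hmgf (Real.exp_pos _).le
  have hset : {ω | (m : ℝ) * ε ≤ ∑ j, (W j ω - μ0)} = {ω | (m : ℝ) * ε ≤ (∑ j, V j) ω} := by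
    ext ω; simp [hV, Finset.sum_apply]
  rw [hset, ← ENNReal.ofReal_toReal (measure_ne_top P _)]
  exact ENNReal.ofReal_le_ofReal hfinal

lemma five_le_four_sqrt_two : (5 : ℝ) ≤ 4 * Real.sqrt 2 := by
  nlinarith [Real.sq_sqrt (show (0:ℝ) ≤ 2 by norm_num), Real.sqrt_nonneg 2]


/-- Concentration of the empirical variance: for iid samples
`X 1, …, X m` with law `p`, a bounded measurable `u`, `δ ∈ (0,1)` and
`θ = (1/m) ln(4/δ)` with `2θ ≤ 1`, with probability at least `1 - δ` the empirical
variance of `u` is within `4 √(2θ) ‖u‖_∞²` of the true variance. -/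
theorem stmt_13 {Ω X : Type*} [MeasurableSpace Ω] [MeasurableSpace X] [Nonempty X]
    (P : Measure Ω) [IsProbabilityMeasure P]
    (p : Measure X) [IsProbabilityMeasure p]
    (u : X → ℝ) (hum : Measurable u) (hub : ∃ C, ∀ x, |u x| ≤ C)
    (m : ℕ) (hm : 0 < m)
    (Xv : Fin m → Ω → X) (hXm : ∀ j, Measurable (Xv j))
    (hindep : iIndepFun Xv P)
    (hlaw : ∀ j, P.map (Xv j) = p)
    (δ : ℝ) (hδ : δ ∈ Set.Ioo (0 : ℝ) 1)
    (θ : ℝ) (hθ : θ = (1 / (m : ℝ)) * Real.log (4 / δ)) (hθ1 : 2 * θ ≤ 1) :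
    ENNReal.ofReal (1 - δ) ≤
      P {ω | |((1 / (m : ℝ)) * ∑ j, (u (Xv j ω)) ^ 2
              - ((1 / (m : ℝ)) * ∑ j, u (Xv j ω)) ^ 2)
            - ((∫ x, (u x) ^ 2 ∂p) - (∫ x, u x ∂p) ^ 2)| ≤
          4 * Real.sqrt (2 * θ) * (⨆ x, |u x|) ^ 2} := by
  obtain ⟨δpos, δlt⟩ := hδ
  have hm' : (m : ℝ) ≠ 0 := Nat.cast_ne_zero.2 hm.ne'
  set M := ⨆ x, |u x| with hMdef
  have hbdd : BddAbove (Set.range fun x => |u x|) := by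
    obtain ⟨C, hC⟩ := hub
    exact ⟨C, by rintro _ ⟨x, rfl⟩; exact hC x⟩
  have hM : ∀ x, |u x| ≤ M := fun x => le_ciSup hbdd x
  have hM0 : 0 ≤ M := (abs_nonneg _).trans (hM (Classical.arbitrary X))
  rcases hM0.eq_or_lt with hMz | hMpos
  · -- degenerate case: u ≡ 0
    have hu : ∀ x, u x = 0 := fun x => abs_nonpos_iff.1 (hMz ▸ hM x)
    have hset : {ω | |((1 / (m : ℝ)) * ∑ j, (u (Xv j ω)) ^ 2
              - ((1 / (m : ℝ)) * ∑ j, u (Xv j ω)) ^ 2)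
            - ((∫ x, (u x) ^ 2 ∂p) - (∫ x, u x ∂p) ^ 2)| ≤
          4 * Real.sqrt (2 * θ) * M ^ 2} = Set.univ := by
      ext ω
      simp only [Set.mem_setOf_eq, Set.mem_univ, iff_true, hu]
      rw [← hMz]
      simp [hu]
    rw [hset]
    simp only [measure_univ]
    exact ENNReal.ofReal_le_one.2 (by linarith)
  · -- main case
    set μ1 := ∫ x, u x ∂p with hμ1
    set μ2 := ∫ x, (u x) ^ 2 ∂p with hμ2
    have hlog : 0 < Real.log (4 / δ) := Real.log_pos (by rw [lt_div_iff₀ δpos]; linarith)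
    have hθpos : 0 < θ := by rw [hθ]; positivity
    have hmθ : (m : ℝ) * θ = Real.log (4 / δ) := by rw [hθ]; field_simp
    set r := Real.sqrt θ with hrdef
    have hr0 : 0 < r := Real.sqrt_pos.2 hθpos
    have hr2 : r ^ 2 = θ := Real.sq_sqrt hθpos.le
    set ε1 : ℝ := 2 * M * r with hε1
    set ε2 : ℝ := M ^ 2 * r with hε2
    -- the four bad events
    set B1 := {ω : Ω | (m : ℝ) * ε1 ≤ ∑ j, (u (Xv j ω) - μ1)} with hB1def
    set B2 := {ω : Ω | (m : ℝ) * ε1 ≤ ∑ j, (-u (Xv j ω) - -μ1)} with hB2def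
    set B3 := {ω : Ω | (m : ℝ) * ε2 ≤ ∑ j, ((u (Xv j ω) ^ 2 - M ^ 2 / 2) - (μ2 - M ^ 2 / 2))}
      with hB3def
    set B4 := {ω : Ω | (m : ℝ) * ε2 ≤ ∑ j, (-(u (Xv j ω) ^ 2 - M ^ 2 / 2) - -(μ2 - M ^ 2 / 2))}
      with hB4def
    -- common ingredients
    have hmean1 : ∀ j, ∫ ω, u (Xv j ω) ∂P = μ1 := by
      intro j
      rw [hμ1, ← hlaw j, integral_map (hXm j).aemeasurable hum.aestronglyMeasurable]
    have huint : Integrable u p :=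
      (integrable_const M).mono' hum.aestronglyMeasurable
        (Filter.Eventually.of_forall fun x => by simpa using hM x)
    have hu2 : ∀ x, |u x ^ 2 - M ^ 2 / 2| ≤ M ^ 2 / 2 := by
      intro x
      have h1 := hM x
      have h2 : u x ^ 2 ≤ M ^ 2 := by
        rw [← sq_abs]
        exact pow_le_pow_left₀ (abs_nonneg _) h1 2
      have h3 : 0 ≤ u x ^ 2 := sq_nonneg _
      rw [abs_le]
      constructor <;> nlinarith
    have hu2int : Integrable (fun x => u x ^ 2) p :=
      (integrable_const (M ^ 2)).mono' (hum.pow_const 2).aestronglyMeasurable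
        (Filter.Eventually.of_forall fun x => by
          rw [Real.norm_eq_abs, abs_of_nonneg (sq_nonneg _)]
          have := hu2 x; have := abs_le.1 this; linarith [this.2])
    have hmean2 : ∀ j, ∫ ω, (u (Xv j ω) ^ 2 - M ^ 2 / 2) ∂P = μ2 - M ^ 2 / 2 := by
      intro j
      have hint : Integrable (fun ω => u (Xv j ω) ^ 2) P := by
        refine (integrable_const (M ^ 2)).mono'
          ((hum.comp (hXm j)).pow_const 2).aestronglyMeasurable
          (Filter.Eventually.of_forall fun ω => ?_)
        rw [Real.norm_eq_abs, abs_of_nonneg (sq_nonneg _), ← sq_abs]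
        exact pow_le_pow_left₀ (abs_nonneg _) (hM _) 2
      rw [integral_sub hint (integrable_const _), integral_const]
      simp only [probReal_univ, smul_eq_mul, one_mul]
      congr 1
      rw [hμ2, ← hlaw j, integral_map (hXm j).aemeasurable
        (hum.pow_const 2).aestronglyMeasurable]
    -- tail bounds
    have hT1 : P B1 ≤ ENNReal.ofReal (δ / 4) := by
      have := aux_tail P (fun j ω => u (Xv j ω)) (fun j => hum.comp (hXm j))
        (hindep.comp (fun _ => u) fun _ => hum) M hMpos (fun j ω => hM _)
        μ1 hmean1 ε1 (by positivity)
      refine this.trans (le_of_eq ?_)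
      congr 1
      rw [show (m : ℝ) * ε1 ^ 2 / (4 * M ^ 2) = (m : ℝ) * θ by
        rw [hε1, ← hr2]; field_simp [hMpos.ne']; ring]
      rw [hmθ, ← Real.log_inv, Real.exp_log (by positivity)]
      field_simp
    have hT2 : P B2 ≤ ENNReal.ofReal (δ / 4) := by
      have hmean1' : ∀ j, ∫ ω, -u (Xv j ω) ∂P = -μ1 := by
        intro j; rw [integral_neg, hmean1 j]
      have := aux_tail P (fun j ω => -u (Xv j ω)) (fun j => (hum.comp (hXm j)).neg)
        (hindep.comp (fun _ x => -u x) fun _ => hum.neg) M hMpos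
        (fun j ω => by rw [abs_neg]; exact hM _)
        (-μ1) hmean1' ε1 (by positivity)
      refine this.trans (le_of_eq ?_)
      congr 1
      rw [show (m : ℝ) * ε1 ^ 2 / (4 * M ^ 2) = (m : ℝ) * θ by
        rw [hε1, ← hr2]; field_simp [hMpos.ne']; ring]
      rw [hmθ, ← Real.log_inv, Real.exp_log (by positivity)]
      field_simp
    have hc2 : (0 : ℝ) < M ^ 2 / 2 := by positivity
    have hT3 : P B3 ≤ ENNReal.ofReal (δ / 4) := by
      have := aux_tail P (fun j ω => u (Xv j ω) ^ 2 - M ^ 2 / 2)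
        (fun j => ((hum.comp (hXm j)).pow_const 2).sub_const _)
        (hindep.comp (fun _ x => u x ^ 2 - M ^ 2 / 2)
          (fun _ => (hum.pow_const 2).sub_const _))
        (M ^ 2 / 2) hc2 (fun j ω => hu2 _)
        (μ2 - M ^ 2 / 2) hmean2 ε2 (by positivity)
      refine this.trans (le_of_eq ?_)
      congr 1
      rw [show (m : ℝ) * ε2 ^ 2 / (4 * (M ^ 2 / 2) ^ 2) = (m : ℝ) * θ by
        rw [hε2, ← hr2]; field_simp [hMpos.ne']; ring]
      rw [hmθ, ← Real.log_inv, Real.exp_log (by positivity)]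
      field_simp
    have hT4 : P B4 ≤ ENNReal.ofReal (δ / 4) := by
      have hmean2' : ∀ j, ∫ ω, -(u (Xv j ω) ^ 2 - M ^ 2 / 2) ∂P = -(μ2 - M ^ 2 / 2) := by
        intro j; rw [integral_neg, hmean2 j]
      have := aux_tail P (fun j ω => -(u (Xv j ω) ^ 2 - M ^ 2 / 2))
        (fun j => (((hum.comp (hXm j)).pow_const 2).sub_const _).neg)
        (hindep.comp (fun _ x => -(u x ^ 2 - M ^ 2 / 2))
          (fun _ => ((hum.pow_const 2).sub_const _).neg))
        (M ^ 2 / 2) hc2 (fun j ω => by rw [abs_neg]; exact hu2 _)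
        (-(μ2 - M ^ 2 / 2)) hmean2' ε2 (by positivity)
      refine this.trans (le_of_eq ?_)
      congr 1
      rw [show (m : ℝ) * ε2 ^ 2 / (4 * (M ^ 2 / 2) ^ 2) = (m : ℝ) * θ by
        rw [hε2, ← hr2]; field_simp [hMpos.ne']; ring]
      rw [hmθ, ← Real.log_inv, Real.exp_log (by positivity)]
      field_simp
    -- measurability of the bad events
    have hmB1 : MeasurableSet B1 := measurableSet_le measurable_const
      (Finset.measurable_sum Finset.univ fun j _ => (hum.comp (hXm j)).sub_const _)
    have hmB2 : MeasurableSet B2 := measurableSet_le measurable_const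
      (Finset.measurable_sum Finset.univ fun j _ => ((hum.comp (hXm j)).neg).sub_const _)
    have hmB3 : MeasurableSet B3 := measurableSet_le measurable_const
      (Finset.measurable_sum Finset.univ fun j _ =>
        (((hum.comp (hXm j)).pow_const 2).sub_const _).sub_const _)
    have hmB4 : MeasurableSet B4 := measurableSet_le measurable_const
      (Finset.measurable_sum Finset.univ fun j _ =>
        ((((hum.comp (hXm j)).pow_const 2).sub_const _).neg).sub_const _)
    have hmB : MeasurableSet (B1 ∪ B2 ∪ B3 ∪ B4) := ((hmB1.union hmB2).union hmB3).union hmB4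
    -- good event inclusion
    have hmpos : (0 : ℝ) < (m : ℝ) := Nat.cast_pos.2 hm
    have hμ1abs : |μ1| ≤ M := by
      have h1 := norm_integral_le_integral_norm (μ := p) u
      have h2 : ∫ x, ‖u x‖ ∂p ≤ M := by
        rw [show (M : ℝ) = ∫ _x : X, M ∂p by simp]
        exact integral_mono huint.norm (integrable_const M) fun x => by simpa using hM x
      simpa using h1.trans h2
    have hsub : (B1 ∪ B2 ∪ B3 ∪ B4)ᶜ ⊆
        {ω | |((1 / (m : ℝ)) * ∑ j, (u (Xv j ω)) ^ 2
              - ((1 / (m : ℝ)) * ∑ j, u (Xv j ω)) ^ 2)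
            - (μ2 - μ1 ^ 2)| ≤ 4 * Real.sqrt (2 * θ) * M ^ 2} := by
      intro ω hω
      simp only [Set.mem_compl_iff, Set.mem_union, not_or, hB1def, hB2def, hB3def, hB4def,
        Set.mem_setOf_eq, not_le] at hω
      obtain ⟨⟨⟨h1, h2⟩, h3⟩, h4⟩ := hω
      have hs1 : ∑ j, (u (Xv j ω) - μ1) = (∑ j, u (Xv j ω)) - (m : ℝ) * μ1 := by
        rw [Finset.sum_sub_distrib, Finset.sum_const, Finset.card_univ, Fintype.card_fin,
          nsmul_eq_mul]
      have hs2 : ∑ j, (-u (Xv j ω) - -μ1) = -((∑ j, u (Xv j ω)) - (m : ℝ) * μ1) := by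
        rw [← hs1, ← Finset.sum_neg_distrib]
        exact Finset.sum_congr rfl fun j _ => by ring
      have hs3 : ∑ j, ((u (Xv j ω) ^ 2 - M ^ 2 / 2) - (μ2 - M ^ 2 / 2)) =
          (∑ j, u (Xv j ω) ^ 2) - (m : ℝ) * μ2 := by
        rw [show (∑ j, ((u (Xv j ω) ^ 2 - M ^ 2 / 2) - (μ2 - M ^ 2 / 2))) =
          ∑ j, (u (Xv j ω) ^ 2 - μ2) from Finset.sum_congr rfl fun j _ => by ring]
        rw [Finset.sum_sub_distrib, Finset.sum_const, Finset.card_univ, Fintype.card_fin,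
          nsmul_eq_mul]
      have hs4 : ∑ j, (-(u (Xv j ω) ^ 2 - M ^ 2 / 2) - -(μ2 - M ^ 2 / 2)) =
          -((∑ j, u (Xv j ω) ^ 2) - (m : ℝ) * μ2) := by
        rw [← hs3, ← Finset.sum_neg_distrib]
        exact Finset.sum_congr rfl fun j _ => by ring
      rw [hs1] at h1
      rw [hs2] at h2
      rw [hs3] at h3
      rw [hs4] at h4
      have habs1 : |(∑ j, u (Xv j ω)) - (m : ℝ) * μ1| ≤ (m : ℝ) * ε1 :=
        abs_le.2 ⟨by linarith, by linarith⟩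
      have habs2 : |(∑ j, u (Xv j ω) ^ 2) - (m : ℝ) * μ2| ≤ (m : ℝ) * ε2 :=
        abs_le.2 ⟨by linarith, by linarith⟩
      have hA : |(1 / (m : ℝ)) * (∑ j, u (Xv j ω) ^ 2) - μ2| ≤ ε2 := by
        rw [show (1 / (m : ℝ)) * (∑ j, u (Xv j ω) ^ 2) - μ2 =
          ((∑ j, u (Xv j ω) ^ 2) - (m : ℝ) * μ2) * (1 / (m : ℝ)) by field_simp,
          abs_mul, abs_of_pos (by positivity : (0 : ℝ) < 1 / (m : ℝ))]
        calc |(∑ j, u (Xv j ω) ^ 2) - (m : ℝ) * μ2| * (1 / (m : ℝ))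
            ≤ ((m : ℝ) * ε2) * (1 / (m : ℝ)) :=
              mul_le_mul_of_nonneg_right habs2 (by positivity)
          _ = ε2 := by field_simp
      have hB : |(1 / (m : ℝ)) * (∑ j, u (Xv j ω)) - μ1| ≤ ε1 := by
        rw [show (1 / (m : ℝ)) * (∑ j, u (Xv j ω)) - μ1 =
          ((∑ j, u (Xv j ω)) - (m : ℝ) * μ1) * (1 / (m : ℝ)) by field_simp,
          abs_mul, abs_of_pos (by positivity : (0 : ℝ) < 1 / (m : ℝ))]
        calc |(∑ j, u (Xv j ω)) - (m : ℝ) * μ1| * (1 / (m : ℝ))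
            ≤ ((m : ℝ) * ε1) * (1 / (m : ℝ)) :=
              mul_le_mul_of_nonneg_right habs1 (by positivity)
          _ = ε1 := by field_simp
      have hBabs : |(1 / (m : ℝ)) * (∑ j, u (Xv j ω))| ≤ M := by
        rw [abs_mul, abs_of_pos (by positivity : (0 : ℝ) < 1 / (m : ℝ))]
        calc (1 / (m : ℝ)) * |∑ j, u (Xv j ω)|
            ≤ (1 / (m : ℝ)) * ((m : ℝ) * M) := by
              apply mul_le_mul_of_nonneg_left _ (by positivity)
              calc |∑ j, u (Xv j ω)| ≤ ∑ j, |u (Xv j ω)| := Finset.abs_sum_le_sum_abs _ _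
                _ ≤ ∑ _j : Fin m, M := Finset.sum_le_sum fun j _ => hM _
                _ = (m : ℝ) * M := by
                    rw [Finset.sum_const, Finset.card_univ, Fintype.card_fin, nsmul_eq_mul]
          _ = M := by field_simp
      show |((1 / (m : ℝ)) * ∑ j, (u (Xv j ω)) ^ 2
              - ((1 / (m : ℝ)) * ∑ j, u (Xv j ω)) ^ 2)
            - (μ2 - μ1 ^ 2)| ≤ 4 * Real.sqrt (2 * θ) * M ^ 2
      have hdecomp : ((1 / (m : ℝ)) * ∑ j, (u (Xv j ω)) ^ 2
              - ((1 / (m : ℝ)) * ∑ j, u (Xv j ω)) ^ 2) - (μ2 - μ1 ^ 2) =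
          ((1 / (m : ℝ)) * (∑ j, u (Xv j ω) ^ 2) - μ2)
          - ((1 / (m : ℝ)) * (∑ j, u (Xv j ω)) - μ1)
            * ((1 / (m : ℝ)) * (∑ j, u (Xv j ω)) + μ1) := by ring
      rw [hdecomp]
      have hprod : |((1 / (m : ℝ)) * (∑ j, u (Xv j ω)) - μ1)
            * ((1 / (m : ℝ)) * (∑ j, u (Xv j ω)) + μ1)| ≤ ε1 * (2 * M) := by
        rw [abs_mul]
        apply mul_le_mul hB _ (abs_nonneg _) (by positivity)
        calc |(1 / (m : ℝ)) * (∑ j, u (Xv j ω)) + μ1|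
            ≤ |(1 / (m : ℝ)) * (∑ j, u (Xv j ω))| + |μ1| := abs_add_le _ _
          _ ≤ M + M := add_le_add hBabs hμ1abs
          _ = 2 * M := by ring
      have htri : |((1 / (m : ℝ)) * (∑ j, u (Xv j ω) ^ 2) - μ2)
          - ((1 / (m : ℝ)) * (∑ j, u (Xv j ω)) - μ1)
            * ((1 / (m : ℝ)) * (∑ j, u (Xv j ω)) + μ1)| ≤ ε2 + ε1 * (2 * M) :=
        (abs_sub _ _).trans (add_le_add hA hprod)
      have h2θ : Real.sqrt (2 * θ) = Real.sqrt 2 * r := by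
        rw [hrdef, ← Real.sqrt_mul (by norm_num : (0:ℝ) ≤ 2)]
      refine htri.trans ?_
      rw [h2θ, hε1, hε2]
      calc M ^ 2 * r + 2 * M * r * (2 * M) = 5 * (r * M ^ 2) := by ring
        _ ≤ (4 * Real.sqrt 2) * (r * M ^ 2) :=
            mul_le_mul_of_nonneg_right five_le_four_sqrt_two
              (mul_nonneg hr0.le (sq_nonneg M))
        _ = 4 * (Real.sqrt 2 * r) * M ^ 2 := by ring
    -- final measure arithmetic
    have hPB : P (B1 ∪ B2 ∪ B3 ∪ B4) ≤ ENNReal.ofReal δ := by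
      calc P (B1 ∪ B2 ∪ B3 ∪ B4) ≤ P (B1 ∪ B2 ∪ B3) + P B4 := measure_union_le _ _
        _ ≤ (P (B1 ∪ B2) + P B3) + P B4 := by
            gcongr
            exact measure_union_le _ _
        _ ≤ ((P B1 + P B2) + P B3) + P B4 := by
            gcongr
            exact measure_union_le _ _
        _ ≤ ((ENNReal.ofReal (δ/4) + ENNReal.ofReal (δ/4)) + ENNReal.ofReal (δ/4))
              + ENNReal.ofReal (δ/4) :=
            add_le_add (add_le_add (add_le_add hT1 hT2) hT3) hT4
        _ = ENNReal.ofReal δ := by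
            rw [← ENNReal.ofReal_add (by positivity) (by positivity),
              ← ENNReal.ofReal_add (by positivity) (by positivity),
              ← ENNReal.ofReal_add (by positivity) (by positivity)]
            congr 1
            ring
    calc ENNReal.ofReal (1 - δ) ≤ 1 - P (B1 ∪ B2 ∪ B3 ∪ B4) := by
          refine ENNReal.le_sub_of_add_le_right (measure_ne_top _ _) ?_
          calc ENNReal.ofReal (1 - δ) + P (B1 ∪ B2 ∪ B3 ∪ B4)
              ≤ ENNReal.ofReal (1 - δ) + ENNReal.ofReal δ := add_le_add_right hPB _
            _ = 1 := by
                rw [← ENNReal.ofReal_add (by linarith) δpos.le]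
                norm_num
      _ = P ((B1 ∪ B2 ∪ B3 ∪ B4)ᶜ) := by
          rw [measure_compl hmB (measure_ne_top _ _), measure_univ]
      _ ≤ _ := measure_mono hsub
end

section
/- Let X be a nonempty measurable space, A a nonempty finite set, and for each a ∈ A let P_a be a Markov kernel from X to X and r_a : X → ℝ a bounded measurable function. Define the optimal Bellman operator (L u)(x) := max_{a∈A} ( r_a(x) + ∫_X u(y) P_a(x)(dy) ) for bounded measurable u. Let u, u' : X → ℝ be bounded measurable and ε_u, ε_s ≥ 0 with ‖u' − L u‖_∞ ≤ ε_u and sp(u' − u) ≤ ε_s. Let d_ε : X → A be a measurable function such that |u'(x) − ( r_{d_ε(x)}(x) + ∫_X u(y) P_{d_ε(x)}(x)(dy) )| ≤ ε_u for all x ∈ X, and let μ_ε be a probability measure on X invariant under the Markov kernel x ↦ P_{d_ε(x)}(x). Let d : X → A be any measurable function and μ any probability measure invariant under the Markov kernel x ↦ P_{d(x)}(x). Then ∫_X r_{d_ε(x)}(x) μ_ε(dx) ≥ ∫_X r_{d(x)}(x) μ(dx) − 2ε_u − ε_s. -/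
open MeasureTheory ProbabilityTheory

section Aux

variable {X A : Type*} [MeasurableSpace X] [Fintype A]
  [MeasurableSpace A] [MeasurableSingletonClass A]

/-- The kernel obtained from a measurable selector. -/
noncomputable def selKernel (P : A → Kernel X X) (s : X → A) (hs : Measurable s) :
    Kernel X X :=
  ⟨fun x => P (s x) x, by
    have h : Measurable (fun p : X × A => P p.2 p.1) :=
      measurable_from_prod_countable_left (fun a => (P a).measurable)
    exact h.comp (measurable_id.prodMk hs)⟩

lemma selKernel_apply (P : A → Kernel X X) (s : X → A) (hs : Measurable s) (x : X) :
    selKernel P s hs x = P (s x) x := rfl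

instance selKernel_markov (P : A → Kernel X X) [∀ a, IsMarkovKernel (P a)]
    (s : X → A) (hs : Measurable s) : IsMarkovKernel (selKernel P s hs) :=
  ⟨fun x => by rw [selKernel_apply]; infer_instance⟩

lemma snd_compProd_eq_bind (μ : Measure X) [IsProbabilityMeasure μ]
    (κ : Kernel X X) [IsMarkovKernel κ] : (μ ⊗ₘ κ).snd = μ.bind κ := by
  ext s hs
  rw [Measure.snd_apply hs, Measure.compProd_apply (measurable_snd hs),
    Measure.bind_apply hs κ.measurable.aemeasurable]
  congr

lemma integral_invariant {μ : Measure X} [IsProbabilityMeasure μ]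
    {κ : Kernel X X} [IsMarkovKernel κ]
    (hinv : μ.bind κ = μ) {f : X → ℝ} (hf : Measurable f) {C : ℝ} (hC : ∀ x, |f x| ≤ C) :
    ∫ x, ∫ y, f y ∂(κ x) ∂μ = ∫ x, f x ∂μ := by
  have hint : Integrable (fun p : X × X => f p.2) (μ ⊗ₘ κ) :=
    Integrable.mono' (integrable_const C) ((hf.comp measurable_snd).aestronglyMeasurable)
      (ae_of_all _ fun p => by simpa using hC p.2)
  have h1 := Measure.integral_compProd (μ := μ) (κ := κ) hint
  have h2 : ∫ x, f x ∂μ = ∫ p : X × X, f p.2 ∂(μ ⊗ₘ κ) := by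
    conv_lhs => rw [← hinv, ← snd_compProd_eq_bind μ κ]
    rw [Measure.snd, integral_map measurable_snd.aemeasurable hf.aestronglyMeasurable]
  rw [h2, h1]

lemma integrable_of_abs_le' {ν : Measure X} [IsFiniteMeasure ν]
    {f : X → ℝ} (hf : AEStronglyMeasurable f ν) {C : ℝ} (hC : ∀ x, |f x| ≤ C) :
    Integrable f ν :=
  Integrable.mono' (integrable_const C) hf
    (ae_of_all _ fun x => by simpa [Real.norm_eq_abs] using hC x)

end Aux

set_option maxHeartbeats 1000000 in
/-- With the optimal Bellman operator
`(L u) x = max_{a} (r_a x + ∫ u d(P_a x))` over a nonempty finite action set, suppose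
`‖u' - L u‖_∞ ≤ ε_u` and `sp(u' - u) ≤ ε_s`. Let `dε` be a measurable selector with
`|u' x - (r_{dε x} x + ∫ u d(P_{dε x} x))| ≤ ε_u` for all `x`, and let `με` be a
probability measure invariant under `x ↦ P_{dε x} x`. Then for any measurable selector
`d` and any probability measure `μ` invariant under `x ↦ P_{d x} x`,
`∫ r_{dε x} x dμε(x) ≥ ∫ r_{d x} x dμ(x) - 2 ε_u - ε_s`. -/
theorem stmt_15 {X A : Type*} [MeasurableSpace X] [Nonempty X]
    [Fintype A] [Nonempty A] [MeasurableSpace A] [MeasurableSingletonClass A]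
    (P : A → Kernel X X) [∀ a, IsMarkovKernel (P a)]
    (r : A → X → ℝ) (hrm : ∀ a, Measurable (r a)) (hrb : ∀ a, ∃ C, ∀ x, |r a x| ≤ C)
    (u u' : X → ℝ) (hum : Measurable u) (hub : ∃ C, ∀ x, |u x| ≤ C)
    (hu'm : Measurable u') (hu'b : ∃ C, ∀ x, |u' x| ≤ C)
    (Lu : X → ℝ) (hLu : ∀ x, Lu x = ⨆ a : A, (r a x + ∫ y, u y ∂(P a x)))
    (εu εs : ℝ) (hεu : 0 ≤ εu) (hεs : 0 ≤ εs)
    (h1 : ∀ x, |u' x - Lu x| ≤ εu)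
    (h2 : (⨆ x, (u' x - u x)) - ⨅ x, (u' x - u x) ≤ εs)
    (dε : X → A) (hdεm : Measurable dε)
    (hdε : ∀ x, |u' x - (r (dε x) x + ∫ y, u y ∂(P (dε x) x))| ≤ εu)
    (με : Measure X) [IsProbabilityMeasure με]
    (hμεinv : με.bind (fun x => P (dε x) x) = με)
    (d : X → A) (hdm : Measurable d)
    (μ : Measure X) [IsProbabilityMeasure μ]
    (hμinv : μ.bind (fun x => P (d x) x) = μ) :
    ∫ x, r (dε x) x ∂με ≥ (∫ x, r (d x) x ∂μ) - 2 * εu - εs := by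
  obtain ⟨Cu, hCu⟩ := hub
  obtain ⟨Cu', hCu'⟩ := hu'b
  -- uniform bound on r
  obtain ⟨Cr, hCr⟩ : ∃ C, ∀ a x, |r a x| ≤ C := by
    choose C hC using hrb
    refine ⟨∑ a, C a, fun a x => le_trans (hC a x) ?_⟩
    exact Finset.single_le_sum (fun b _ => (abs_nonneg (r b x)).trans (hC b x))
      (Finset.mem_univ a)
  -- measurability of selector compositions
  have hrsel : ∀ (s : X → A), Measurable s → Measurable (fun x => r (s x) x) := fun s hs =>
    (measurable_from_prod_countable_left (f := fun p : X × A => r p.2 p.1) (fun a => hrm a)).comp (measurable_id.prodMk hs)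
  set κε := selKernel P dε hdεm with hκε
  set κd := selKernel P d hdm with hκd
  -- the integral-against-kernel functions
  have hgsm : ∀ (κ : Kernel X X) [IsSFiniteKernel κ],
      StronglyMeasurable (fun x => ∫ y, u y ∂(κ x)) := by
    intro κ _
    exact MeasureTheory.StronglyMeasurable.integral_kernel_prod_right
      (f := fun _ y => u y) ((hum.comp measurable_snd).stronglyMeasurable)
  have hgbd : ∀ (ν : Measure X), IsProbabilityMeasure ν → |∫ y, u y ∂ν| ≤ Cu := by
    intro ν hν
    calc |∫ y, u y ∂ν| ≤ Cu * (ν Set.univ).toReal := by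
          simpa [Real.norm_eq_abs] using
            norm_integral_le_of_norm_le_const (μ := ν) (f := u) (C := Cu)
              (ae_of_all _ fun y => by simpa [Real.norm_eq_abs] using hCu y)
      _ = Cu := by simp
  -- integrabilities
  have hintεr : Integrable (fun x => r (dε x) x) με :=
    integrable_of_abs_le' ((hrsel dε hdεm).aestronglyMeasurable) (fun x => hCr _ x)
  have hintdr : Integrable (fun x => r (d x) x) μ :=
    integrable_of_abs_le' ((hrsel d hdm).aestronglyMeasurable) (fun x => hCr _ x)
  have hintεu' : Integrable u' με := integrable_of_abs_le' hu'm.aestronglyMeasurable hCu'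
  have hintdu' : Integrable u' μ := integrable_of_abs_le' hu'm.aestronglyMeasurable hCu'
  have hintεu : Integrable u με := integrable_of_abs_le' hum.aestronglyMeasurable hCu
  have hintdu : Integrable u μ := integrable_of_abs_le' hum.aestronglyMeasurable hCu
  have hintεg : Integrable (fun x => ∫ y, u y ∂(κε x)) με :=
    integrable_of_abs_le' (hgsm κε).aestronglyMeasurable
      (fun x => hgbd _ (by rw [hκε, selKernel_apply]; infer_instance))
  have hintdg : Integrable (fun x => ∫ y, u y ∂(κd x)) μ :=
    integrable_of_abs_le' (hgsm κd).aestronglyMeasurable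
      (fun x => hgbd _ (by rw [hκd, selKernel_apply]; infer_instance))
  -- invariance identities
  have hμεinv' : με.bind ⇑κε = με := hμεinv
  have hμinv' : μ.bind ⇑κd = μ := hμinv
  have hinvε : ∫ x, ∫ y, u y ∂(κε x) ∂με = ∫ x, u x ∂με :=
    integral_invariant (κ := κε) hμεinv' hum hCu
  have hinvd : ∫ x, ∫ y, u y ∂(κd x) ∂μ = ∫ x, u x ∂μ :=
    integral_invariant (κ := κd) hμinv' hum hCu
  -- Step 1 : ∫ rε dμε ≥ ∫ u' dμε - ∫ u dμε - εu
  have step1 : ∫ x, r (dε x) x ∂με ≥ ∫ x, u' x ∂με - ∫ x, u x ∂με - εu := by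
    have hpt : ∀ x, u' x - εu ≤ r (dε x) x + ∫ y, u y ∂(κε x) := by
      intro x
      have := (abs_le.1 (hdε x)).2
      have hk : ∫ y, u y ∂(κε x) = ∫ y, u y ∂(P (dε x) x) := by rw [hκε, selKernel_apply]
      linarith [hk ▸ this]
    have hmono := integral_mono (μ := με) (f := fun x => u' x - εu)
      (g := fun x => r (dε x) x + ∫ y, u y ∂(κε x))
      (hintεu'.sub (integrable_const εu)) (hintεr.add hintεg) hpt
    rw [integral_sub hintεu' (integrable_const εu), integral_add hintεr hintεg,
      integral_const] at hmono
    simp only [probReal_univ, smul_eq_mul, one_mul] at hmono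
    linarith [hinvε]
  -- Step 2 : ∫ rd dμ ≤ ∫ u' dμ - ∫ u dμ + εu
  have step2 : ∫ x, r (d x) x ∂μ ≤ ∫ x, u' x ∂μ - ∫ x, u x ∂μ + εu := by
    have hpt : ∀ x, r (d x) x + ∫ y, u y ∂(κd x) ≤ u' x + εu := by
      intro x
      have hk : ∫ y, u y ∂(κd x) = ∫ y, u y ∂(P (d x) x) := by rw [hκd, selKernel_apply]
      have hle : r (d x) x + ∫ y, u y ∂(P (d x) x) ≤ Lu x := by
        rw [hLu x]
        exact le_ciSup (f := fun a => r a x + ∫ y, u y ∂(P a x)) (Set.Finite.bddAbove (Set.finite_range _)) (d x)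
      have := (abs_le.1 (h1 x)).1
      linarith [hk ▸ hle]
    have hmono := integral_mono (μ := μ) (f := fun x => r (d x) x + ∫ y, u y ∂(κd x))
      (g := fun x => u' x + εu)
      (hintdr.add hintdg) (hintdu'.add (integrable_const εu)) hpt
    rw [integral_add hintdr hintdg, integral_add hintdu' (integrable_const εu),
      integral_const] at hmono
    simp only [probReal_univ, smul_eq_mul, one_mul] at hmono
    linarith [hinvd]
  -- Step 3 : span bound
  have hfb : ∀ x, |u' x - u x| ≤ Cu' + Cu := fun x =>
    (abs_sub _ _).trans (add_le_add (hCu' x) (hCu x))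
  have hbdd : BddAbove (Set.range fun x => u' x - u x) := by
    refine ⟨Cu' + Cu, ?_⟩
    rintro _ ⟨x, rfl⟩
    exact (abs_le.1 (hfb x)).2
  have hbdd' : BddBelow (Set.range fun x => u' x - u x) := by
    refine ⟨-(Cu' + Cu), ?_⟩
    rintro _ ⟨x, rfl⟩
    exact (abs_le.1 (hfb x)).1
  have step3 : ∫ x, (u' x - u x) ∂με ≥ ∫ x, (u' x - u x) ∂μ - εs := by
    have hlow : (⨅ x, (u' x - u x)) ≤ ∫ x, (u' x - u x) ∂με := by
      have := integral_mono (μ := με) (integrable_const (⨅ x, (u' x - u x)))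
        (hintεu'.sub hintεu) (fun x => ciInf_le hbdd' x)
      simpa using this
    have hhigh : ∫ x, (u' x - u x) ∂μ ≤ ⨆ x, (u' x - u x) := by
      have := integral_mono (μ := μ) (hintdu'.sub hintdu)
        (integrable_const (⨆ x, (u' x - u x))) (fun x => le_ciSup hbdd x)
      simpa using this
    linarith
  rw [integral_sub hintεu' hintεu] at step3
  rw [integral_sub hintdu' hintdu] at step3
  linarith
end
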